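/- Let F be a field, let N ⊴ G be groups, and let W be an irreducible FN-module whose inertia group I_G(W) equals N. Then ind_N^G W is an irreducible FG-module. -/

import Mathlib

open scoped TensorProduct DirectSum

section Preliminaries

variable (F : Type*) [Field F]

/-- Isomorphism (equivalence) of representations: an `F`-linear equivalence intertwining
the two actions. -/
def RepIso {G : Type*} [Monoid G] {V V' : Type*} [AddCommMonoid V] [Module F V]
    [AddCommMonoid V'] [Module F V'] (ρ : Representation F G V) (τ : Representation F G V') :
    Prop :=
  ∃ e : V ≃ₗ[F] V', ∀ (g : G) (v : V), e (ρ g v) = τ g (e v)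

/-- Irreducibility of a representation: the space is nonzero and admits no invariant
subspaces other than `⊥` and `⊤`. -/
def IsIrreducibleRep {G : Type*} [Monoid G] {V : Type*} [AddCommMonoid V] [Module F V]
    (ρ : Representation F G V) : Prop :=
  Nontrivial V ∧ ∀ p : Submodule F V, (∀ g : G, ∀ v ∈ p, ρ g v ∈ p) → p = ⊥ ∨ p = ⊤

/-- The subrepresentation on an invariant submodule. -/
def subRep {G : Type*} [Monoid G] {V : Type*} [AddCommMonoid V] [Module F V]
    (ρ : Representation F G V) (p : Submodule F V) (hp : ∀ g : G, ∀ v ∈ p, ρ g v ∈ p) :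
    Representation F G ↥p where
  toFun g := (ρ g).restrict (fun v hv => hp g v hv)
  map_one' := by ext v; simp [LinearMap.restrict_apply]
  map_mul' g₁ g₂ := by ext v; simp [LinearMap.restrict_apply]

/-- A representation is completely reducible if the underlying module is the sum of its
irreducible invariant submodules. -/
def IsCompletelyReducibleRep {G : Type*} [Monoid G] {V : Type*} [AddCommMonoid V]
    [Module F V] (ρ : Representation F G V) : Prop :=
  sSup {q : Submodule F V |
    ∃ hq : ∀ g : G, ∀ v ∈ q, ρ g v ∈ q, IsIrreducibleRep F (subRep F ρ q hq)} = ⊤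

/-- The homogeneous component determined by `σ`: the sum of all irreducible invariant
submodules whose subrepresentation is isomorphic to `σ`. -/
noncomputable def homComponent {G : Type*} [Monoid G] {V W : Type*} [AddCommMonoid V]
    [Module F V] [AddCommMonoid W] [Module F W] (ρ : Representation F G V)
    (σ : Representation F G W) : Submodule F V :=
  sSup {q : Submodule F V |
    ∃ hq : ∀ g : G, ∀ v ∈ q, ρ g v ∈ q,
      IsIrreducibleRep F (subRep F ρ q hq) ∧ RepIso F (subRep F ρ q hq) σ}

/-- The set of all homogeneous components of a representation. -/
noncomputable def homComponents {G : Type*} [Monoid G] {V : Type*} [AddCommMonoid V]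
    [Module F V] (ρ : Representation F G V) : Set (Submodule F V) :=
  {S | ∃ (q : Submodule F V) (hq : ∀ g : G, ∀ v ∈ q, ρ g v ∈ q),
      IsIrreducibleRep F (subRep F ρ q hq) ∧ S = homComponent F ρ (subRep F ρ q hq)}

/-- A representation `ρ` lies over `σ` if it admits an invariant submodule whose
subrepresentation is isomorphic to `σ`. -/
def LiesOver {G : Type*} [Monoid G] {V W : Type*} [AddCommMonoid V] [Module F V]
    [AddCommMonoid W] [Module F W] (ρ : Representation F G V) (σ : Representation F G W) :
    Prop :=
  ∃ (q : Submodule F V) (hq : ∀ g : G, ∀ v ∈ q, ρ g v ∈ q),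
    RepIso F (subRep F ρ q hq) σ

/-- The stabilizer in `G` of a subspace of a representation space. -/
def stabSubgroup {G : Type*} [Group G] {V : Type*} [AddCommGroup V] [Module F V]
    (ρ : Representation F G V) (S : Submodule F V) : Subgroup G where
  carrier := {g : G | S.map (ρ g) = S}
  one_mem' := by
    show S.map (ρ 1) = S
    rw [map_one, Module.End.one_eq_id]
    exact Submodule.map_id S
  mul_mem' := by
    intro a b ha hb
    show S.map (ρ (a * b)) = S
    rw [map_mul, Module.End.mul_eq_comp, Submodule.map_comp, hb, ha]
  inv_mem' := by
    intro a ha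
    show S.map (ρ a⁻¹) = S
    conv_lhs => rw [← ha]
    rw [← Submodule.map_comp, ← Module.End.mul_eq_comp, ← map_mul, inv_mul_cancel, map_one,
      Module.End.one_eq_id, Submodule.map_id]

theorem stabSubgroup_mapsTo {G : Type*} [Group G] {V : Type*} [AddCommGroup V] [Module F V]
    (ρ : Representation F G V) (S : Submodule F V) :
    ∀ g : ↥(stabSubgroup F ρ S), ∀ v ∈ S, ρ (g : G) v ∈ S := by
  intro g v hv
  have hg : S.map (ρ (g : G)) = S := g.2
  have := Submodule.mem_map_of_mem (f := ρ (g : G)) hv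
  rwa [hg] at this

/-- Outer tensor product of representations of two groups. -/
noncomputable def outerRep {G₁ G₂ : Type*} [Monoid G₁] [Monoid G₂] {V₁ V₂ : Type*}
    [AddCommMonoid V₁] [Module F V₁] [AddCommMonoid V₂] [Module F V₂]
    (ρ₁ : Representation F G₁ V₁) (ρ₂ : Representation F G₂ V₂) :
    Representation F (G₁ × G₂) (V₁ ⊗[F] V₂) :=
  Representation.tprod (ρ₁.comp (MonoidHom.fst G₁ G₂)) (ρ₂.comp (MonoidHom.snd G₁ G₂))

/-- A projective representation with factor set `α`. -/
def IsProjRep {G : Type*} [Group G] {W : Type*} [AddCommGroup W] [Module F W]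
    (X : G → (W →ₗ[F] W)) (α : G → G → Fˣ) : Prop :=
  (∀ g : G, Function.Bijective (X g)) ∧
    ∀ g₁ g₂ : G, (X g₁) ∘ₗ (X g₂) = ((α g₁ g₂ : F)) • X (g₁ * g₂)

/-- Irreducibility of a projective representation: no proper nonzero invariant subspace. -/
def IsProjIrred {G : Type*} [Group G] {W : Type*} [AddCommGroup W] [Module F W]
    (X : G → (W →ₗ[F] W)) : Prop :=
  Nontrivial W ∧ ∀ p : Submodule F W, (∀ g : G, ∀ w ∈ p, X g w ∈ p) → p = ⊥ ∨ p = ⊤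

/-- `D` is a system of representatives for the `(H₁,H₂)`-double cosets in `G`. -/
def IsDCosetReps {G : Type*} [Group G] (H₁ H₂ : Subgroup G) (D : Set G) : Prop :=
  ∀ g : G, ∃! d : G, d ∈ D ∧ ∃ h₁ ∈ H₁, ∃ h₂ ∈ H₂, g = h₁ * d * h₂

end Preliminaries

section Induction

variable (F : Type*) [Field F] {G : Type*} [Group G] (H : Subgroup G)
variable {W : Type*} [AddCommGroup W] [Module F W] (σ : Representation F ↥H W)

/-- The submodule of relations defining the induced module `FG ⊗_{FH} W` as a quotient
of `FG ⊗_F W`. -/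
noncomputable def indRel : Submodule (MonoidAlgebra F G) (MonoidAlgebra F G ⊗[F] W) :=
  Submodule.span (MonoidAlgebra F G)
    {z | ∃ (x : H) (w : W),
      z = (MonoidAlgebra.single (x : G) (1 : F)) ⊗ₜ[F] w
            - (1 : MonoidAlgebra F G) ⊗ₜ[F] (σ x w)}

/-- The underlying space of the induced module `ind_H^G W = FG ⊗_{FH} W`. -/
noncomputable def IndCar := (MonoidAlgebra F G ⊗[F] W) ⧸ indRel F H σ

noncomputable instance : AddCommGroup (IndCar F H σ) :=
  inferInstanceAs (AddCommGroup ((MonoidAlgebra F G ⊗[F] W) ⧸ indRel F H σ))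

noncomputable instance : Module (MonoidAlgebra F G) (IndCar F H σ) :=
  inferInstanceAs (Module (MonoidAlgebra F G) ((MonoidAlgebra F G ⊗[F] W) ⧸ indRel F H σ))

noncomputable instance : Module F (IndCar F H σ) :=
  inferInstanceAs (Module F ((MonoidAlgebra F G ⊗[F] W) ⧸ indRel F H σ))

noncomputable instance : IsScalarTower F (MonoidAlgebra F G) (IndCar F H σ) :=
  inferInstanceAs (IsScalarTower F (MonoidAlgebra F G)
    ((MonoidAlgebra F G ⊗[F] W) ⧸ indRel F H σ))

/-- The induced representation of `G` on `ind_H^G W = FG ⊗_{FH} W`. -/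
noncomputable def IndRep : Representation F G (IndCar F H σ) where
  toFun g :=
    { toFun := fun v => (MonoidAlgebra.single g (1 : F) : MonoidAlgebra F G) • v
      map_add' := fun a b => smul_add _ a b
      map_smul' := fun c v => smul_comm _ c v }
  map_one' := by
    ext v
    show MonoidAlgebra.single (1 : G) (1 : F) • v = v
    rw [← MonoidAlgebra.one_def, one_smul]
  map_mul' g₁ g₂ := by
    ext v
    show MonoidAlgebra.single (g₁ * g₂) (1 : F) • v = _
    rw [show (MonoidAlgebra.single (g₁ * g₂) (1 : F) : MonoidAlgebra F G)
          = MonoidAlgebra.single g₁ 1 * MonoidAlgebra.single g₂ 1 by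
        rw [MonoidAlgebra.single_mul_single, one_mul], mul_smul]
    rfl

end Induction

section DirectSums

variable (F : Type*) [Field F] {G : Type*} [Monoid G]

/-- The direct sum of a family of representations. -/
noncomputable def dsumRep {ι : Type*} {V : ι → Type*} [∀ i, AddCommGroup (V i)]
    [∀ i, Module F (V i)] (ρ : ∀ i, Representation F G (V i)) :
    Representation F G (⨁ i, V i) where
  toFun g := DFinsupp.mapRange.linearMap (fun i => ρ i g)
  map_one' := by
    simp only [map_one]
    exact DFinsupp.mapRange.linearMap_id
  map_mul' g₁ g₂ := by
    simp only [map_mul, Module.End.mul_eq_comp]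
    exact DFinsupp.mapRange.linearMap_comp (fun i => ρ i g₁) (fun i => ρ i g₂)

end DirectSums

section Conjugation

variable {G : Type*} [Group G]

/-- Conjugation `x ↦ g x g⁻¹` as a monoid homomorphism of a normal subgroup. -/
def conjHom {N : Subgroup G} (hN : N.Normal) (g : G) : ↥N →* ↥N where
  toFun x := ⟨g * (x : G) * g⁻¹, hN.conj_mem x.1 x.2 g⟩
  map_one' := by ext; simp
  map_mul' x y := by ext; simp [mul_assoc]

/-- The conjugate subgroup `xHx⁻¹`. -/
def conjSubgroup (x : G) (H : Subgroup G) : Subgroup G :=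
  H.map (MulAut.conj x).toMonoidHom

/-- Conjugating back: the homomorphism `K → H`, `k ↦ x⁻¹ k x`, for `K ≤ xHx⁻¹`. -/
def unconjHom (x : G) (H : Subgroup G) {K : Subgroup G} (hK : K ≤ conjSubgroup x H) :
    ↥K →* ↥H where
  toFun k := ⟨x⁻¹ * (k : G) * x, by
    obtain ⟨h, hh, e⟩ := hK k.2
    have : x⁻¹ * (k : G) * x = h := by
      rw [← e]; simp [MulAut.conj_apply, mul_assoc]
    rw [this]; exact hh⟩
  map_one' := by ext; simp
  map_mul' a b := by
    ext
    show x⁻¹ * (↑a * ↑b) * x = (x⁻¹ * ↑a * x) * (x⁻¹ * ↑b * x)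
    group

/-- The homomorphism `K ∩ xHx⁻¹ → H` (with the source regarded as a subgroup of `K`),
given by `k ↦ x⁻¹ k x`. -/
def mackeyHom (x : G) (H K : Subgroup G) :
    ↥((K ⊓ conjSubgroup x H).subgroupOf K) →* ↥H where
  toFun l := ⟨x⁻¹ * ((l : ↥K) : G) * x, by
    have h2 : ((l : ↥K) : G) ∈ K ⊓ conjSubgroup x H := l.2
    obtain ⟨h, hh, e⟩ := h2.2
    have : x⁻¹ * ((l : ↥K) : G) * x = h := by
      rw [← e]; simp [MulAut.conj_apply, mul_assoc]
    rw [this]; exact hh⟩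
  map_one' := by ext; simp
  map_mul' a b := by
    ext
    show x⁻¹ * (↑↑a * ↑↑b) * x = (x⁻¹ * ↑↑a * x) * (x⁻¹ * ↑↑b * x)
    group

end Conjugation

/-!
Restricted to `N`, the induced module `ind_N^G W` is the direct sum over `G ⧸ N` of the
conjugates `x ↦ σ (g⁻¹ x g)` of `W`, one for each coset `gN`. These are irreducible, and they are
pairwise non-isomorphic because the inertia group is `N`. In such a sum, a nonzero vector of
minimal support in an `N`-subrepresentation lies in a single summand, so a nonzero
`G`-subrepresentation contains a whole summand; since `G` permutes the summands transitively,
it contains all of them.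
-/

section RepIso

variable {F : Type*} [Field F] {G : Type*} [Monoid G] {V V' V'' : Type*}
  [AddCommGroup V] [Module F V] [AddCommGroup V'] [Module F V'] [AddCommGroup V'']
  [Module F V''] {ρ : Representation F G V} {τ : Representation F G V'}
  {υ : Representation F G V''}

theorem repIso_of_bijective (φ : V →ₗ[F] V') (hφ : ∀ g v, φ (ρ g v) = τ g (φ v))
    (hbij : Function.Bijective φ) : RepIso F ρ τ :=
  ⟨LinearEquiv.ofBijective φ hbij, hφ⟩

theorem RepIso.symm (h : RepIso F ρ τ) : RepIso F τ ρ := by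
  obtain ⟨e, he⟩ := h
  refine ⟨e.symm, fun g v => e.injective ?_⟩
  rw [he, LinearEquiv.apply_symm_apply, LinearEquiv.apply_symm_apply]

theorem RepIso.trans (h₁ : RepIso F ρ τ) (h₂ : RepIso F τ υ) : RepIso F ρ υ := by
  obtain ⟨e₁, he₁⟩ := h₁
  obtain ⟨e₂, he₂⟩ := h₂
  exact ⟨e₁.trans e₂, fun g v => by simp [he₁, he₂]⟩

theorem RepIso.comp {K : Type*} [Monoid K] (h : RepIso F ρ τ) (f : K →* G) :
    RepIso F (ρ.comp f) (τ.comp f) := by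
  obtain ⟨e, he⟩ := h
  exact ⟨e, fun k v => he (f k) v⟩

theorem IsIrreducibleRep.of_repIso (h : RepIso F ρ τ) (hτ : IsIrreducibleRep F τ) :
    IsIrreducibleRep F ρ := by
  obtain ⟨e, he⟩ := h
  have := hτ.1
  refine ⟨e.symm.injective.nontrivial, fun p hp => ?_⟩
  have hq : ∀ g, ∀ v ∈ p.map (e : V →ₗ[F] V'), τ g v ∈ p.map (e : V →ₗ[F] V') := by
    rintro g _ ⟨v, hv, rfl⟩
    exact ⟨ρ g v, hp g v hv, he g v⟩
  simpa only [Submodule.map_eq_bot_iff, Submodule.map_eq_top_iff] using hτ.2 _ hq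

theorem IsIrreducibleRep.comp_of_surjective {K : Type*} [Monoid K]
    (hρ : IsIrreducibleRep F ρ) {f : K →* G} (hf : Function.Surjective f) :
    IsIrreducibleRep F (ρ.comp f) := by
  refine ⟨hρ.1, fun p hp => hρ.2 p fun g v hv => ?_⟩
  obtain ⟨k, rfl⟩ := hf g
  exact hp k v hv

end RepIso

section DirectSum

open DirectSum

variable {F : Type*} [Field F] {G : Type*} [Monoid G] {ι : Type*}
  {V : ι → Type*} [∀ i, AddCommGroup (V i)] [∀ i, Module F (V i)]
  {ρ : ∀ i, Representation F G (V i)}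

theorem dsumRep_apply_apply (g : G) (v : ⨁ i, V i) (i : ι) :
    dsumRep F ρ g v i = ρ i g (v i) :=
  rfl

variable [DecidableEq ι]

theorem dsumRep_lof (g : G) (i : ι) (w : V i) :
    dsumRep F ρ g (lof F ι V i w) = lof F ι V i (ρ i g w) :=
  DFinsupp.mapRange_single (hf := fun j => map_zero (ρ j g))

theorem eq_of_mem_support_of_minimal [∀ i (x : V i), Decidable (x ≠ 0)]
    (hρ : ∀ i, IsIrreducibleRep F (ρ i)) (hiso : ∀ i j, RepIso F (ρ i) (ρ j) → i = j)
    {q : Submodule F (⨁ i, V i)} (hq : ∀ g, ∀ v ∈ q, dsumRep F ρ g v ∈ q)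
    {v : ⨁ i, V i} (hv : v ∈ q) (hmin : ∀ m ∈ q, m ≠ 0 → v.support.card ≤ m.support.card)
    {i j : ι} (hi : i ∈ v.support) (hj : j ∈ v.support) : i = j := by
  set M := q ⊓ ⨅ (k : ι) (_ : v k = 0), LinearMap.ker (component F ι V k)
  have mem_M : ∀ m, m ∈ M ↔ m ∈ q ∧ ∀ k, v k = 0 → m k = 0 := by
    simp only [M, Submodule.mem_inf, Submodule.mem_iInf, LinearMap.mem_ker]
    exact fun m => Iff.rfl
  have hM : ∀ g, ∀ m ∈ M, dsumRep F ρ g m ∈ M := by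
    intro g m hm
    rw [mem_M] at hm ⊢
    exact ⟨hq g m hm.1, fun k hk => by rw [dsumRep_apply_apply, hm.2 k hk, map_zero]⟩
  -- Each such coordinate projection is injective by minimality of `v`, surjective by
  -- irreducibility of `ρ k`.
  have iso : ∀ k ∈ v.support, RepIso F (subRep F (dsumRep F ρ) M hM) (ρ k) := by
    intro k hk
    refine repIso_of_bijective (component F ι V k ∘ₗ M.subtype) (fun _ _ => rfl) ⟨?_, ?_⟩
    · rw [← LinearMap.ker_eq_bot, Submodule.eq_bot_iff]
      rintro ⟨m, hm⟩ hmk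
      rw [Submodule.mk_eq_zero]
      by_contra hm0
      have hsupp : m.support ⊆ v.support.erase k := by
        intro l hl
        rw [DFinsupp.mem_support_iff] at hl
        refine Finset.mem_erase.2 ⟨?_, DFinsupp.mem_support_iff.2 fun hvl => hl ?_⟩
        · rintro rfl; exact hl hmk
        · exact ((mem_M m).1 hm).2 l hvl
      have := (Finset.card_le_card hsupp).trans_lt (Finset.card_erase_lt_of_mem hk)
      exact (hmin m ((mem_M m).1 hm).1 hm0).not_gt this
    · rw [← LinearMap.range_eq_top]
      refine ((hρ k).2 _ ?_).resolve_left ?_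
      · rintro g _ ⟨m, rfl⟩
        exact ⟨subRep F (dsumRep F ρ) M hM g m, rfl⟩
      · refine (Submodule.ne_bot_iff _).2 ⟨v k, ⟨⟨v, (mem_M v).2 ⟨hv, fun _ h => h⟩⟩, rfl⟩, ?_⟩
        exact DFinsupp.mem_support_iff.1 hk
  exact hiso i j ((iso i hi).symm.trans (iso j hj))

theorem exists_lof_mem_of_ne_bot (hρ : ∀ i, IsIrreducibleRep F (ρ i))
    (hiso : ∀ i j, RepIso F (ρ i) (ρ j) → i = j) {q : Submodule F (⨁ i, V i)}
    (hq : ∀ g, ∀ v ∈ q, dsumRep F ρ g v ∈ q) (hq0 : q ≠ ⊥) :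
    ∃ i, ∃ w ≠ 0, lof F ι V i w ∈ q := by
  classical
  obtain ⟨v, ⟨hvq, hv0⟩, hmin⟩ :=
    (InvImage.wf (fun v : ⨁ i, V i => v.support.card) wellFounded_lt).has_min
      {v | v ∈ q ∧ v ≠ 0} ((Submodule.ne_bot_iff q).1 hq0)
  obtain ⟨i, hi⟩ : v.support.Nonempty := by
    rwa [Finset.nonempty_iff_ne_empty, Ne, DFinsupp.support_eq_empty]
  have hmin' : ∀ m ∈ q, m ≠ 0 → v.support.card ≤ m.support.card :=
    fun m hm hm0 => not_lt.1 (hmin m ⟨hm, hm0⟩)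
  have hv : v = lof F ι V i (v i) := by
    ext j
    by_cases hji : j = i
    · subst hji; rw [lof_apply]
    · rw [lof_eq_of, of_eq_of_ne _ _ _ hji, ← DFinsupp.notMem_support_iff]
      exact fun hj => hji (eq_of_mem_support_of_minimal hρ hiso hq hvq hmin' hj hi)
  exact ⟨i, v i, DFinsupp.mem_support_iff.1 hi, hv ▸ hvq⟩

theorem exists_range_lof_le_of_ne_bot (hρ : ∀ i, IsIrreducibleRep F (ρ i))
    (hiso : ∀ i j, RepIso F (ρ i) (ρ j) → i = j) {q : Submodule F (⨁ i, V i)}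
    (hq : ∀ g, ∀ v ∈ q, dsumRep F ρ g v ∈ q) (hq0 : q ≠ ⊥) :
    ∃ i, LinearMap.range (lof F ι V i) ≤ q := by
  obtain ⟨i, w, hw, hwq⟩ := exists_lof_mem_of_ne_bot hρ hiso hq hq0
  refine ⟨i, LinearMap.range_le_iff_comap.2 (((hρ i).2 _ fun g u hu => ?_).resolve_left ?_)⟩
  · rw [Submodule.mem_comap, ← dsumRep_lof]
    exact hq g _ hu
  · exact (Submodule.ne_bot_iff _).2 ⟨w, hwq, hw⟩

end DirectSum

section InducedModel

open DirectSum MonoidAlgebra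
open scoped Classical

variable {F : Type*} [Field F] {G : Type*} [Group G] (H : Subgroup G)

noncomputable def cosetOffset (g : G) : H :=
  ⟨(g : G ⧸ H).out⁻¹ * g, by rw [← QuotientGroup.eq, QuotientGroup.out_eq']⟩

theorem cosetOffset_mul (g : G) (h : H) : cosetOffset H (g * h) = cosetOffset H g * h := by
  ext
  simp only [cosetOffset, QuotientGroup.mk_mul_of_mem g h.2, Subgroup.coe_mul, mul_assoc]

theorem cosetOffset_out (Q : G ⧸ H) : cosetOffset H Q.out = 1 := by
  ext
  simp [cosetOffset]

variable {H} {W : Type*} [AddCommGroup W] [Module F W] (σ : Representation F H W)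

noncomputable def indLift : MonoidAlgebra F G ⊗[F] W →ₗ[F] ⨁ _ : G ⧸ H, W :=
  TensorProduct.lift <|
    Finsupp.lsum F (fun g : G => LinearMap.toSpanSingleton F _
        (lof F (G ⧸ H) (fun _ => W) (g : G ⧸ H) ∘ₗ σ (cosetOffset H g))) ∘ₗ
      (coeffLinearEquiv F).toLinearMap

theorem indLift_single_tmul (g : G) (c : F) (w : W) :
    indLift σ (single g c ⊗ₜ w) =
      c • lof F (G ⧸ H) (fun _ => W) (g : G ⧸ H) (σ (cosetOffset H g) w) := by
  simp [indLift, LinearMap.toSpanSingleton]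

theorem indLift_smul_indRel_generator (x : H) (w : W) (a : MonoidAlgebra F G) :
    indLift σ (a • (single (x : G) (1 : F) ⊗ₜ[F] w - (1 : MonoidAlgebra F G) ⊗ₜ[F] σ x w)) =
      0 := by
  induction a using MonoidAlgebra.induction_linear with
  | zero => rw [zero_smul, map_zero]
  | add a b ha hb => rw [add_smul, map_add, ha, hb, add_zero]
  | single g c =>
    rw [smul_sub, TensorProduct.smul_tmul', TensorProduct.smul_tmul', smul_eq_mul, smul_eq_mul,
      single_mul_single, mul_one, mul_one, map_sub, indLift_single_tmul, indLift_single_tmul,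
      QuotientGroup.mk_mul_of_mem g x.2, cosetOffset_mul, map_mul, Module.End.mul_apply,
      sub_self]

theorem indLift_eq_zero_of_mem_indRel {z : MonoidAlgebra F G ⊗[F] W} (hz : z ∈ indRel F H σ) :
    indLift σ z = 0 := by
  suffices ∀ a : MonoidAlgebra F G, indLift σ (a • z) = 0 by simpa using this 1
  refine Submodule.span_induction ?_ ?_ ?_ ?_ hz
  · rintro _ ⟨x, w, rfl⟩
    exact indLift_smul_indRel_generator σ x w
  · simp
  · intro z z' _ _ hz hz' a
    rw [smul_add, map_add, hz, hz', add_zero]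
  · intro b z _ hz a
    rw [smul_smul]
    exact hz _

noncomputable def indToDirectSum : IndCar F H σ →ₗ[F] ⨁ _ : G ⧸ H, W :=
  ((indRel F H σ).restrictScalars F).liftQ (indLift σ)
      (fun _ hz => indLift_eq_zero_of_mem_indRel σ hz) ∘ₗ
    (Submodule.Quotient.restrictScalarsEquiv F (indRel F H σ)).symm.toLinearMap

theorem indToDirectSum_mk (z : MonoidAlgebra F G ⊗[F] W) :
    indToDirectSum σ (Submodule.Quotient.mk z) = indLift σ z :=
  rfl

noncomputable def directSumToInd : (⨁ _ : G ⧸ H, W) →ₗ[F] IndCar F H σ :=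
  toModule F (G ⧸ H) (IndCar F H σ) fun Q =>
    ((indRel F H σ).mkQ.restrictScalars F) ∘ₗ TensorProduct.mk F _ W (single Q.out 1)

theorem directSumToInd_lof (Q : G ⧸ H) (w : W) :
    directSumToInd σ (lof F (G ⧸ H) (fun _ => W) Q w) =
      Submodule.Quotient.mk (single Q.out (1 : F) ⊗ₜ[F] w) := by
  rw [directSumToInd, toModule_lof]
  rfl

theorem mk_single_tmul (g : G) (c : F) (w : W) :
    (Submodule.Quotient.mk (single g c ⊗ₜ[F] w) : IndCar F H σ) =
      Submodule.Quotient.mk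
        (c • (single (g : G ⧸ H).out (1 : F) ⊗ₜ[F] σ (cosetOffset H g) w)) := by
  rw [Submodule.Quotient.eq]
  have hg : (g : G ⧸ H).out * cosetOffset H g = g := mul_inv_cancel_left _ _
  have hrel : single (cosetOffset H g : G) (1 : F) ⊗ₜ[F] w -
      (1 : MonoidAlgebra F G) ⊗ₜ[F] σ (cosetOffset H g) w ∈ indRel F H σ :=
    Submodule.subset_span ⟨_, _, rfl⟩
  convert (indRel F H σ).smul_mem (single (g : G ⧸ H).out c) hrel using 1
  simp only [TensorProduct.smul_tmul', smul_single, smul_eq_mul, mul_one, smul_sub,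
    single_mul_single, hg]

theorem directSumToInd_indLift (z : MonoidAlgebra F G ⊗[F] W) :
    directSumToInd σ (indLift σ z) = Submodule.Quotient.mk z := by
  induction z using TensorProduct.induction_on with
  | zero => rw [map_zero, map_zero]; rfl
  | add a b ha hb => rw [map_add, map_add, ha, hb]; rfl
  | tmul a w =>
    induction a using MonoidAlgebra.induction_linear with
    | zero => rw [TensorProduct.zero_tmul, map_zero, map_zero]; rfl
    | add a b ha hb => rw [TensorProduct.add_tmul, map_add, map_add, ha, hb]; rfl
    | single g c =>
      rw [indLift_single_tmul, map_smul, directSumToInd_lof, mk_single_tmul σ g]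
      rfl

noncomputable def indEquivDirectSum : IndCar F H σ ≃ₗ[F] ⨁ _ : G ⧸ H, W :=
  LinearEquiv.ofLinearMap (indToDirectSum σ) (directSumToInd σ)
    (linearMap_ext F fun Q => LinearMap.ext fun w => by
      simp [directSumToInd_lof, indToDirectSum_mk, indLift_single_tmul, cosetOffset_out])
    (LinearMap.ext fun z => by
      obtain ⟨z, rfl⟩ := Submodule.Quotient.mk_surjective _ z
      exact directSumToInd_indLift σ z)

noncomputable def indRepDirectSum : Representation F G (⨁ _ : G ⧸ H, W) :=
  (indEquivDirectSum σ).conjRingEquiv.toMonoidHom.comp (IndRep F H σ)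

theorem repIso_indRepDirectSum : RepIso F (IndRep F H σ) (indRepDirectSum σ) :=
  ⟨indEquivDirectSum σ, fun g v => by simp [indRepDirectSum]⟩

theorem indRepDirectSum_apply (g : G) (u : ⨁ _ : G ⧸ H, W) :
    indRepDirectSum σ g u = indToDirectSum σ (IndRep F H σ g (directSumToInd σ u)) :=
  rfl

theorem indRep_mk (g : G) (z : MonoidAlgebra F G ⊗[F] W) :
    IndRep F H σ g (Submodule.Quotient.mk z) =
      Submodule.Quotient.mk (single g (1 : F) • z) :=
  rfl

theorem indRepDirectSum_lof (g : G) (Q : G ⧸ H) (w : W) :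
    indRepDirectSum σ g (lof F (G ⧸ H) (fun _ => W) Q w) =
      lof F (G ⧸ H) (fun _ => W) (g * Q.out : G) (σ (cosetOffset H (g * Q.out)) w) := by
  rw [indRepDirectSum_apply, directSumToInd_lof, indRep_mk, TensorProduct.smul_tmul',
    smul_eq_mul, single_mul_single, one_mul, indToDirectSum_mk, indLift_single_tmul, one_smul]

theorem eq_top_of_range_lof_le {q : Submodule F (⨁ _ : G ⧸ H, W)}
    (hq : ∀ g, ∀ u ∈ q, indRepDirectSum σ g u ∈ q) {i : G ⧸ H}
    (hi : LinearMap.range (lof F (G ⧸ H) (fun _ => W) i) ≤ q) : q = ⊤ := by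
  have hlof : ∀ Q w, lof F (G ⧸ H) (fun _ => W) Q w ∈ q := by
    intro Q w
    have := hq (Q.out * i.out⁻¹) _ (hi ⟨w, rfl⟩)
    rwa [indRepDirectSum_lof, inv_mul_cancel_right, QuotientGroup.out_eq', cosetOffset_out,
      map_one, Module.End.one_apply] at this
  rw [eq_top_iff, ← DFinsupp.iSup_range_lsingle, iSup_le_iff]
  rintro Q _ ⟨w, rfl⟩
  exact hlof Q w

end InducedModel

section Normal

open DirectSum
open scoped Classical

variable {F : Type*} [Field F] {G : Type*} [Group G] {N : Subgroup G} (hN : N.Normal)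
variable {W : Type*} [AddCommGroup W] [Module F W] (σ : Representation F N W)

theorem conjHom_one : conjHom hN 1 = MonoidHom.id N := by
  ext
  simp [conjHom]

theorem conjHom_mul (a b : G) : conjHom hN (a * b) = (conjHom hN a).comp (conjHom hN b) := by
  ext
  simp [conjHom, mul_assoc]

theorem conjHom_surjective (g : G) : Function.Surjective (conjHom hN g) := fun x =>
  ⟨conjHom hN g⁻¹ x, by rw [← MonoidHom.comp_apply, ← conjHom_mul, mul_inv_cancel, conjHom_one,
    MonoidHom.id_apply]⟩

theorem eq_of_repIso_comp_conjHom
    (hT : ∀ g : G, RepIso F (σ.comp (conjHom hN g)) σ → g ∈ N) {P Q : G ⧸ N}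
    (h : RepIso F (σ.comp (conjHom hN P.out⁻¹)) (σ.comp (conjHom hN Q.out⁻¹))) : P = Q := by
  have h' := h.comp (conjHom hN Q.out)
  rw [MonoidHom.comp_assoc, MonoidHom.comp_assoc, ← conjHom_mul, ← conjHom_mul, inv_mul_cancel,
    conjHom_one, MonoidHom.comp_id] at h'
  rw [← QuotientGroup.out_eq' P, ← QuotientGroup.out_eq' Q, QuotientGroup.eq]
  exact hT _ h'

theorem indRepDirectSum_coe (x : N) :
    indRepDirectSum σ (x : G) = dsumRep F (fun Q : G ⧸ N => σ.comp (conjHom hN Q.out⁻¹)) x := by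
  refine linearMap_ext F fun Q => LinearMap.ext fun w => ?_
  have hx : (x : G) * Q.out = Q.out * (conjHom hN Q.out⁻¹ x : G) := by
    simp [conjHom, mul_assoc]
  rw [LinearMap.comp_apply, LinearMap.comp_apply, indRepDirectSum_lof, dsumRep_lof, hx,
    QuotientGroup.mk_mul_of_mem _ (conjHom hN Q.out⁻¹ x).2, QuotientGroup.out_eq',
    cosetOffset_mul, cosetOffset_out, one_mul]
  rfl

theorem isIrreducibleRep_indRepDirectSum (hσ : IsIrreducibleRep F σ)
    (hT : ∀ g : G, RepIso F (σ.comp (conjHom hN g)) σ → g ∈ N) :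
    IsIrreducibleRep F (indRepDirectSum σ) := by
  have := hσ.1
  refine ⟨(of_injective (β := fun _ : G ⧸ N => W) 1).nontrivial,
    fun q hq => or_iff_not_imp_left.2 fun hq0 => ?_⟩
  obtain ⟨i, hi⟩ := exists_range_lof_le_of_ne_bot
    (fun Q => hσ.comp_of_surjective (conjHom_surjective hN Q.out⁻¹))
    (fun _ _ => eq_of_repIso_comp_conjHom hN σ hT)
    (fun x u hu => indRepDirectSum_coe hN σ x ▸ hq x u hu) hq0
  exact eq_top_of_range_lof_le σ hq hi

end Normal

/-- Corollary 3.4: if `N ⊴ G` and `W` is an irreducible `FN`-module whose inertia group is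
`N` itself, then `ind_N^G W` is an irreducible `FG`-module. -/
theorem induced_irreducible_of_inertia_eq
    (F : Type*) [Field F] {G : Type*} [Group G] (N : Subgroup G) (hN : N.Normal)
    (W : Type*) [AddCommGroup W] [Module F W] (σ : Representation F ↥N W)
    (hσ : IsIrreducibleRep F σ)
    (hT : ∀ g : G, RepIso F (σ.comp (conjHom hN g)) σ ↔ g ∈ N) :
    IsIrreducibleRep F (IndRep F N σ) :=
  (isIrreducibleRep_indRepDirectSum hN σ hσ fun g => (hT g).1).of_repIso
    (repIso_indRepDirectSum σ)
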